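/- Let G be a group, M a normal abelian subgroup of G, and suppose G/M is generated by the images of b₁, …, b_s ∈ G. Then for every k ≥ 1, the k-fold commutator subgroup [M, G, …, G] (with G appearing k times) equals the product of the subgroups [M, b_{i₁}, …, b_{i_k}] taken over all choices of indices i₁, …, i_k ∈ {1, …, s}. -/

import Mathlib

/-!
Since `M` is abelian and normal, `h ↦ ⁅h, x⁆` is multiplicative on `M`, so `[-, x]` commutes
with joins of subgroups of `M`; this reduces the theorem by induction on `k` to the case `k = 1`
applied to `N = [M, G, …, G] ≤ M`: `[N, G] = ⨆ⱼ [N, bⱼ]`. For that, `K = ⨆ⱼ [N, bⱼ]` is normalised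
by every `bⱼ` (conjugating `N` by `bⱼ` only changes elements modulo `K`) and centralised by `M`,
hence normal in `G = M ⊔ ⟨b⟩`. Modulo `K`, the image of `N` is then centralised by `M` and by the
`bⱼ`, hence by all of `G`, i.e. `[N, G] ≤ K`.
-/

open scoped commutatorElement

/-- The iterated commutator subgroup `[M, G, …, G]` with `G` appearing `k` times. -/
def iterCommTop {G : Type*} [Group G] (M : Subgroup G) : ℕ → Subgroup G
  | 0 => M
  | k + 1 => ⁅iterCommTop M k, (⊤ : Subgroup G)⁆

/-- The iterated subgroup `[M, b₁, …, b_k]`, where at each step `[H, b]` denotes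
the subgroup generated by the commutators `[h, b]` with `h ∈ H`. -/
def iterCommElts {G : Type*} [Group G] (M : Subgroup G) (l : List G) : Subgroup G :=
  l.foldl (fun H b => Subgroup.closure ((fun h => ⁅h, b⁆) '' (H : Set G))) M

namespace Subgroup

variable {G : Type*} [Group G]

lemma mem_normalizer_of_commutatorElement_mem {K N : Subgroup G} [N.Normal] (hKN : K ≤ N)
    {g : G} (h : ∀ n ∈ N, ⁅n, g⁆ ∈ K) : g ∈ normalizer (K : Set G) := by
  refine mem_normalizer_iff.2 fun x => ⟨fun hx => ?_, fun hx => ?_⟩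
  · have hconj : g * x * g⁻¹ = ⁅x, g⁆⁻¹ * x := by group
    rw [hconj]
    exact mul_mem (inv_mem (h x (hKN hx))) hx
  · have hconj : x = ⁅x, g⁆ * (g * x * g⁻¹) := by group
    -- `x = g⁻¹ y g` with `y := g x g⁻¹ ∈ K ≤ N`, so `x ∈ N` by normality.
    have hxN : x ∈ N := by
      simpa [mul_assoc] using Normal.conj_mem ‹_› _ (hKN hx) g⁻¹
    rw [hconj]
    exact mul_mem (h x hxN) hx

lemma commutator_top_le_of_closure_eq_top {N K : Subgroup G} [K.Normal] {S : Set G}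
    (hS : closure S = ⊤) (h : ∀ n ∈ N, ∀ g ∈ S, ⁅n, g⁆ ∈ K) : ⁅N, ⊤⁆ ≤ K := by
  let C : Subgroup G :=
    (centralizer (N.map (QuotientGroup.mk' K) : Set (G ⧸ K))).comap (QuotientGroup.mk' K)
  have mem_C : ∀ g, g ∈ C ↔ ∀ n ∈ N, ⁅n, g⁆ ∈ K := by
    intro g
    have hmk : ∀ n : G, ((⁅n, g⁆ : G) : G ⧸ K) = ⁅(n : G ⧸ K), (g : G ⧸ K)⁆ := fun n =>
      map_commutatorElement (QuotientGroup.mk' K) n g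
    simp [C, mem_centralizer_iff, ← QuotientGroup.eq_one_iff, hmk,
      commutatorElement_eq_one_iff_mul_comm]
  have hC : C = ⊤ :=
    eq_top_iff.2 <| hS ▸ (closure_le C).2 fun g hg => (mem_C g).2 fun n hn => h n hn g hg
  exact commutator_le.2 fun n hn g _ => (mem_C g).1 (hC ▸ mem_top g) n hn

lemma sup_closure_eq_top_of_closure_image_mk {M : Subgroup G} [M.Normal] {S : Set G}
    (h : closure ((↑) '' S : Set (G ⧸ M)) = ⊤) : M ⊔ closure S = ⊤ := by
  have hmap : (M ⊔ closure S).map (QuotientGroup.mk' M) = ⊤ := by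
    rw [Subgroup.map_sup, MonoidHom.map_closure, QuotientGroup.coe_mk', h, sup_top_eq]
  simpa [QuotientGroup.ker_mk'] using congrArg (comap (QuotientGroup.mk' M)) hmap

end Subgroup

open Subgroup

section

variable {G : Type*} [Group G]

def commElt (H : Subgroup G) (x : G) : Subgroup G :=
  closure ((fun h => ⁅h, x⁆) '' (H : Set G))

lemma iterCommElts_ofFn_snoc (M : Subgroup G) {k : ℕ} (f : Fin k → G) (x : G) :
    iterCommElts M (List.ofFn (Fin.snoc f x)) = commElt (iterCommElts M (List.ofFn f)) x := by
  rw [List.ofFn_succ', List.concat_eq_append]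
  simp only [Fin.snoc_castSucc, Fin.snoc_last, iterCommElts, List.foldl_append, List.foldl_cons,
    List.foldl_nil, commElt]

lemma commElt_le_of_le_normal {H N : Subgroup G} [N.Normal] (hHN : H ≤ N) (x : G) :
    commElt H x ≤ N :=
  closure_le _ |>.2 <| by
    rintro _ ⟨h, hh, rfl⟩
    exact commutator_le_left N ⊤ (commutator_mem_commutator (hHN hh) (mem_top x))

lemma iterCommElts_le_of_le_normal {H N : Subgroup G} [N.Normal] (hHN : H ≤ N) (l : List G) :
    iterCommElts H l ≤ N := by
  induction l generalizing H with
  | nil => exact hHN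
  | cons x l ih => exact ih (commElt_le_of_le_normal hHN x)

instance iterCommTop_normal (M : Subgroup G) [M.Normal] (k : ℕ) : (iterCommTop M k).Normal := by
  induction k with
  | zero => assumption
  | succ k ih => exact commutator_normal _ _

lemma iterCommTop_le (M : Subgroup G) [M.Normal] (k : ℕ) : iterCommTop M k ≤ M := by
  induction k with
  | zero => exact le_rfl
  | succ k ih => exact (commutator_le_left _ _).trans ih

lemma commutatorElement_mul_left_of_commute {x y g : G} (h : Commute x ⁅y, g⁆) :
    ⁅x * y, g⁆ = ⁅y, g⁆ * ⁅x, g⁆ := by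
  have hexp : ⁅x * y, g⁆ = x * ⁅y, g⁆ * x⁻¹ * ⁅x, g⁆ := by group
  rw [hexp, h.eq, mul_inv_cancel_right]

lemma commElt_iSup {M : Subgroup G} [M.Normal] (hab : ∀ x ∈ M, ∀ y ∈ M, x * y = y * x)
    {ι : Sort*} {A : ι → Subgroup G} (hA : ∀ i, A i ≤ M) (x : G) :
    commElt (⨆ i, A i) x = ⨆ i, commElt (A i) x := by
  refine le_antisymm ((closure_le _).2 ?_)
    (iSup_le fun i => closure_mono (Set.image_mono (le_iSup A i)))
  rintro _ ⟨h, hh, rfl⟩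
  induction hh using iSup_induction' with
  | hp i y hy => exact mem_iSup_of_mem i (subset_closure ⟨y, hy, rfl⟩)
  | h1 => simp
  | hmul y z hy hz hyx hzx =>
    have hzxM : ⁅z, x⁆ ∈ M :=
      commElt_le_of_le_normal (iSup_le hA) x (subset_closure ⟨z, hz, rfl⟩)
    change ⁅y * z, x⁆ ∈ _
    rw [commutatorElement_mul_left_of_commute (hab _ (iSup_le hA hy) _ hzxM)]
    exact mul_mem hzx hyx

lemma commutator_top_eq_iSup_commElt {M : Subgroup G}
    (hab : ∀ x ∈ M, ∀ y ∈ M, x * y = y * x) {ι : Type*} {b : ι → G}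
    (hMb : M ⊔ closure (Set.range b) = ⊤) (N : Subgroup G) [N.Normal] (hNM : N ≤ M) :
    ⁅N, ⊤⁆ = ⨆ i, commElt N (b i) := by
  set K := ⨆ i, commElt N (b i)
  have hK : ∀ i, ∀ n ∈ N, ⁅n, b i⁆ ∈ K := fun i n hn =>
    mem_iSup_of_mem i (subset_closure ⟨n, hn, rfl⟩)
  have hKN : K ≤ N := iSup_le fun i => commElt_le_of_le_normal le_rfl (b i)
  have : K.Normal := by
    rw [← normalizer_eq_top_iff, eq_top_iff, ← hMb, sup_le_iff, closure_le]
    constructor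
    · refine le_trans (fun m hm => ?_) (centralizer_le_normalizer _)
      exact mem_centralizer_iff.2 fun x hx => hab _ (hNM (hKN hx)) _ hm
    · rintro _ ⟨i, rfl⟩
      exact mem_normalizer_of_commutatorElement_mem hKN (hK i)
  refine le_antisymm (commutator_top_le_of_closure_eq_top (S := M ∪ Set.range b)
    (by rw [Subgroup.closure_union, closure_eq, hMb]) ?_) ?_
  · rintro n hn g (hg | ⟨i, rfl⟩)
    · rw [commutatorElement_eq_one_iff_mul_comm.2 (hab _ (hNM hn) _ hg)]
      exact one_mem K
    · exact hK i n hn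
  · exact iSup_le fun i => (closure_le _).2 <| by
      rintro _ ⟨n, hn, rfl⟩
      exact commutator_mem_commutator hn (mem_top _)

lemma iSup_iterCommElts_ofFn_succ (M : Subgroup G) {ι : Type*} (b : ι → G) (k : ℕ) :
    ⨆ c : Fin (k + 1) → ι, iterCommElts M (List.ofFn fun j => b (c j)) =
      ⨆ (i) (c : Fin k → ι), commElt (iterCommElts M (List.ofFn fun j => b (c j))) (b i) := by
  rw [← (Fin.snocEquiv fun _ => ι).iSup_comp, iSup_prod]
  refine iSup_congr fun i => iSup_congr fun c => ?_
  rw [← iterCommElts_ofFn_snoc]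
  exact congrArg (iterCommElts M ∘ List.ofFn) (Fin.comp_snoc b c i)

end

theorem stmt_6_general {G : Type*} [Group G] (M : Subgroup G) [M.Normal]
    (hab : ∀ x ∈ M, ∀ y ∈ M, x * y = y * x)
    (s : ℕ) (b : Fin s → G)
    (hgen : Subgroup.closure (Set.range fun i => (QuotientGroup.mk (b i) : G ⧸ M)) = ⊤)
    (k : ℕ) :
    iterCommTop M k = ⨆ c : Fin k → Fin s, iterCommElts M (List.ofFn fun j => b (c j)) := by
  have hMb : M ⊔ closure (Set.range b) = ⊤ :=
    sup_closure_eq_top_of_closure_image_mk (by rwa [← Set.range_comp])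
  induction k with
  | zero => simp [iterCommTop, iterCommElts]
  | succ k ih =>
    rw [iSup_iterCommElts_ofFn_succ, iterCommTop,
      commutator_top_eq_iSup_commElt hab hMb _ (iterCommTop_le M k), ih]
    simp only [commElt_iSup hab fun _ => iterCommElts_le_of_le_normal le_rfl _]

theorem stmt_6 {G : Type*} [Group G] (M : Subgroup G) [M.Normal]
    (hab : ∀ x ∈ M, ∀ y ∈ M, x * y = y * x)
    (s : ℕ) (b : Fin s → G)
    (hgen : Subgroup.closure (Set.range fun i => (QuotientGroup.mk (b i) : G ⧸ M)) = ⊤)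
    (k : ℕ) (hk : 1 ≤ k) :
    iterCommTop M k = ⨆ c : Fin k → Fin s, iterCommElts M (List.ofFn fun j => b (c j)) :=
  stmt_6_general M hab s b hgen k
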